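/- arXiv:2210.06714 — 5 statements merged into one kernel-verified Lean document; each statement's English description precedes it below -/
import Mathlib

section
/- If a graph G on vertex set V can be partitioned into two parts V1 and V2 such that the set of edges between V1 and V2 forms a perfect matching, and G has no induced path on 5 vertices, then both induced subgraphs G[V1] and G[V2] have no induced path on 4 vertices (i.e., both are cographs). -/
open SimpleGraph

/-- `(V1, V1ᶜ)` is a perfect matching cut of `G`: every vertex has exactly one
neighbor on the other side of the partition. -/
def IsPerfectMatchingCut {V : Type*} (G : SimpleGraph V) (V1 : Set V) : Prop :=
  ∀ v : V, ∃! w : V, G.Adj v w ∧ (v ∈ V1 ↔ w ∉ V1)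

set_option maxHeartbeats 2000000 in
lemma key_aux {V : Type*} (G : SimpleGraph V) (P : Set V)
    (hcut : ∀ v : V, ∃! w : V, G.Adj v w ∧ (v ∈ P ↔ w ∉ P))
    (hP5 : IsEmpty (pathGraph 5 ↪g G)) :
    IsEmpty (pathGraph 4 ↪g G.induce P) := by
  constructor
  intro f
  have hmem : ∀ i : Fin 4, (f i : V) ∈ P := fun i => (f i).2
  have hadj : ∀ i j : Fin 4, G.Adj (f i : V) (f j : V) ↔ (pathGraph 4).Adj i j := by
    intro i j
    rw [← f.map_rel_iff]
    rfl
  have hne : ∀ i j : Fin 4, i ≠ j → (f i : V) ≠ (f j : V) := by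
    intro i j hij h
    exact hij (f.injective (Subtype.ext h))
  obtain ⟨w, ⟨hwadj, hwside⟩, hwuniq⟩ := hcut (f 0 : V)
  have hwP : w ∉ P := hwside.1 (hmem 0)
  -- w is not adjacent to f 1, f 2, f 3
  have hwnadj : ∀ i : Fin 4, i ≠ 0 → ¬ G.Adj w (f i : V) := by
    intro i hi hadjw
    obtain ⟨u, _, huuniq⟩ := hcut w
    have h0 : (f 0 : V) = u := huuniq _ ⟨hwadj.symm, by simp [hwP, hmem 0]⟩
    have hiu : (f i : V) = u := huuniq _ ⟨hadjw, by simp [hwP, hmem i]⟩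
    exact hne i 0 hi (hiu.trans h0.symm)
  have a01 : G.Adj (f 0 : V) (f 1 : V) := (hadj 0 1).2 (by rw [pathGraph_adj]; decide)
  have a12 : G.Adj (f 1 : V) (f 2 : V) := (hadj 1 2).2 (by rw [pathGraph_adj]; decide)
  have a23 : G.Adj (f 2 : V) (f 3 : V) := (hadj 2 3).2 (by rw [pathGraph_adj]; decide)
  have n02 : ¬ G.Adj (f 0 : V) (f 2 : V) := fun h => by
    have := (hadj 0 2).1 h; rw [pathGraph_adj] at this; exact (by decide : ¬ _) this
  have n03 : ¬ G.Adj (f 0 : V) (f 3 : V) := fun h => by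
    have := (hadj 0 3).1 h; rw [pathGraph_adj] at this; exact (by decide : ¬ _) this
  have n13 : ¬ G.Adj (f 1 : V) (f 3 : V) := fun h => by
    have := (hadj 1 3).1 h; rw [pathGraph_adj] at this; exact (by decide : ¬ _) this
  have nw1 : ¬ G.Adj w (f 1 : V) := hwnadj 1 (by decide)
  have nw2 : ¬ G.Adj w (f 2 : V) := hwnadj 2 (by decide)
  have nw3 : ¬ G.Adj w (f 3 : V) := hwnadj 3 (by decide)
  have hwne : ∀ i : Fin 4, w ≠ (f i : V) := fun i h => hwP (h ▸ hmem i)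
  have d01 := hne 0 1 (by decide)
  have d02 := hne 0 2 (by decide)
  have d03 := hne 0 3 (by decide)
  have d12 := hne 1 2 (by decide)
  have d13 := hne 1 3 (by decide)
  have d23 := hne 2 3 (by decide)
  have hw0 := hwne 0
  have hw1 := hwne 1
  have hw2 := hwne 2
  have hw3 := hwne 3
  have hwadj' : G.Adj w (f 0 : V) := hwadj.symm
  refine hP5.false (⟨⟨![w, (f 0 : V), f 1, f 2, f 3], ?_⟩, ?_⟩)
  · intro i j h
    fin_cases i <;> fin_cases j <;> simp at h <;>
      first
        | rfl
        | (exact absurd h (by assumption))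
        | (exact absurd h.symm (by assumption))
  · intro i j
    fin_cases i <;> fin_cases j <;>
      simp [pathGraph_adj, show ((0:Fin 5):ℕ) = 0 from rfl, show ((1:Fin 5):ℕ) = 1 from rfl,
        show ((2:Fin 5):ℕ) = 2 from rfl, show ((3:Fin 5):ℕ) = 3 from rfl,
        show ((4:Fin 5):ℕ) = 4 from rfl] <;>
      first
        | assumption
        | exact a01.symm
        | exact a12.symm
        | exact a23.symm
        | exact G.irrefl
        | (intro h; exact (by assumption : ¬ G.Adj _ _) h.symm)

/-- If a graph `G` admits a partition `(V1, V1ᶜ)` whose crossing edges form a perfect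
matching, and `G` is `P₅`-free, then both `G[V1]` and `G[V1ᶜ]` are `P₄`-free (cographs). -/
theorem pmcut_P5_free_parts_are_cographs {V : Type*} (G : SimpleGraph V) (V1 : Set V)
    (hcut : IsPerfectMatchingCut G V1)
    (hP5 : IsEmpty (pathGraph 5 ↪g G)) :
    IsEmpty (pathGraph 4 ↪g G.induce V1) ∧ IsEmpty (pathGraph 4 ↪g G.induce V1ᶜ) := by
  constructor
  · exact key_aux G V1 hcut hP5
  · apply key_aux G V1ᶜ _ hP5
    intro v
    obtain ⟨w, ⟨hadj, hside⟩, huniq⟩ := hcut v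
    refine ⟨w, ⟨hadj, ?_⟩, fun u ⟨huadj, huside⟩ => huniq u ⟨huadj, ?_⟩⟩
    · simp only [Set.mem_compl_iff]; tauto
    · simp only [Set.mem_compl_iff] at huside; tauto
end

section
/- A cograph with at least two vertices is connected if and only if its complement is disconnected. -/
/-!
Let `G` be a connected cograph on at least two vertices with `Gᶜ` connected, and pick a
vertex `v`. It has a neighbour and a non-neighbour, so `G - v` has at least two vertices and,
by induction, `G - v` or its complement is disconnected; as `P₄` is self-complementary, we may
assume it is `G - v`. Then `v` is adjacent to every vertex: were `a ∼ v`, `a ∼ c` in `G - v`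
and `c ≁ v`, a neighbour `u` of `v` in another component of `G - v` would give the induced
path `c - a - v - u`. So `v` is isolated in `Gᶜ`, a contradiction. Conversely, the complement
of any disconnected graph is connected.
-/

open SimpleGraph

namespace SimpleGraph

variable {V : Type*} {G : SimpleGraph V}

def IsCograph (G : SimpleGraph V) : Prop := ¬ pathGraph 4 ⊴ G

/-- The complement of the path `0 - 1 - 2 - 3` is the path `1 - 3 - 0 - 2`. -/
def pathGraphFourIsoCompl : pathGraph 4 ≃g (pathGraph 4)ᶜ where
  toFun := ![1, 3, 0, 2]
  invFun := ![2, 0, 3, 1]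
  left_inv := by decide
  right_inv := by decide
  map_rel_iff' {i j} := by
    fin_cases i <;> fin_cases j <;> simp [pathGraph_adj]

theorem IsCograph.compl (h : G.IsCograph) : Gᶜ.IsCograph := fun hc ↦
  h <| by simpa using pathGraphFourIsoCompl.isIndContained.trans hc.compl

theorem IsCograph.induce (h : G.IsCograph) (s : Set V) : (G.induce s).IsCograph := fun hs ↦
  h <| hs.trans (Embedding.induce s).isIndContained

theorem induce_compl (s : Set V) : (G.induce s)ᶜ = Gᶜ.induce s := by
  ext a b
  simp [Subtype.ext_iff]

theorem pathGraph_four_isIndContained {a b c d : V} (hab : G.Adj a b) (hbc : G.Adj b c)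
    (hcd : G.Adj c d) (hac : ¬ G.Adj a c) (hbd : ¬ G.Adj b d) (had : ¬ G.Adj a d)
    (hac' : a ≠ c) (hbd' : b ≠ d) (had' : a ≠ d) : pathGraph 4 ⊴ G := by
  refine ⟨⟨⟨![a, b, c, d], fun i j h ↦ ?_⟩, fun {i j} ↦ ?_⟩⟩
  · fin_cases i <;> fin_cases j <;> simp_all [hab.ne, hbc.ne, hcd.ne, eq_comm]
  · show G.Adj (![a, b, c, d] i) (![a, b, c, d] j) ↔ _
    fin_cases i <;> fin_cases j <;> simp_all [pathGraph_adj, adj_comm]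

theorem Reachable.mem_of_forall_adj_mem {S : Set V} (hS : ∀ ⦃a b⦄, a ∈ S → G.Adj a b → b ∈ S)
    {a b : V} (h : G.Reachable a b) (ha : a ∈ S) : b ∈ S := by
  rw [reachable_iff_reflTransGen] at h
  induction h with
  | refl => exact ha
  | tail _ hbc ih => exact hS ih hbc

theorem Connected.exists_adj_reachable_induce_compl_singleton (hG : G.Connected) {v : V}
    (x : ({v}ᶜ : Set V)) :
    ∃ u : ({v}ᶜ : Set V), G.Adj v u ∧ (G.induce {v}ᶜ).Reachable x u := by
  let S : Set V := {y | ∀ hy : y ∈ ({v}ᶜ : Set V),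
    ∃ u : ({v}ᶜ : Set V), G.Adj v u ∧ (G.induce {v}ᶜ).Reachable ⟨y, hy⟩ u}
  have hS : ∀ ⦃a b⦄, a ∈ S → G.Adj a b → b ∈ S := by
    intro a b ha hab hb
    by_cases hav : a = v
    · subst hav
      exact ⟨⟨b, hb⟩, hab, .rfl⟩
    · obtain ⟨u, hvu, hau⟩ := ha hav
      have hba : (G.induce {v}ᶜ).Adj ⟨b, hb⟩ ⟨a, hav⟩ := hab.symm
      exact ⟨u, hvu, hba.reachable.trans hau⟩
  exact (hG.preconnected v x).mem_of_forall_adj_mem hS (fun hv ↦ absurd rfl hv) x.2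

theorem IsCograph.adj_of_not_connected_induce_compl_singleton (hG : G.IsCograph)
    (hconn : G.Connected) {v : V} (hdis : ¬ (G.induce {v}ᶜ).Connected) {w : V} (hw : w ≠ v) :
    G.Adj v w := by
  set H := G.induce {v}ᶜ
  have : Nonempty ({v}ᶜ : Set V) := ⟨⟨w, hw⟩⟩
  obtain ⟨x, y, hxy⟩ : ∃ x y, ¬ H.Reachable x y := by
    simpa [connected_iff, Preconnected, this] using hdis
  have step : ∀ ⦃a c : ({v}ᶜ : Set V)⦄, G.Adj v a → H.Adj a c → G.Adj v c := by
    intro a c hva hac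
    by_contra hvc
    obtain ⟨z, hz⟩ : ∃ z, ¬ H.Reachable a z := by
      by_contra! h
      exact hxy ((h x).symm.trans (h y))
    obtain ⟨u, hvu, hzu⟩ := hconn.exists_adj_reachable_induce_compl_singleton z
    have hau : ¬ H.Reachable a u := fun h ↦ hz (h.trans hzu.symm)
    have hcu : ¬ H.Reachable c u := fun h ↦ hau (hac.reachable.trans h)
    exact hG <| pathGraph_four_isIndContained (a := c.1) (b := a.1) (c := v) (d := u.1)
      hac.symm hva.symm hvu (fun h ↦ hvc h.symm) (fun h ↦ hau (show H.Adj a u from h).reachable)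
      (fun h ↦ hcu (show H.Adj c u from h).reachable) c.2 (fun h ↦ hau (Subtype.ext h ▸ .rfl))
      (fun h ↦ hcu (Subtype.ext h ▸ .rfl))
  obtain ⟨u, hvu, hwu⟩ := hconn.exists_adj_reachable_induce_compl_singleton ⟨w, hw⟩
  exact hwu.symm.mem_of_forall_adj_mem (S := {a : ({v}ᶜ : Set V) | G.Adj v a}) step hvu

theorem IsCograph.subsingleton_of_connected_of_compl_connected [Finite V] (hG : G.IsCograph)
    (hc : G.Connected) (hcc : Gᶜ.Connected) : Subsingleton V := by
  induction V using Finite.induction_subsingleton_or_nontrivial with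
  | hbase => infer_instance
  | hstep V ih =>
    obtain ⟨v, -⟩ := exists_pair_ne V
    obtain ⟨u, hvu⟩ := hc.preconnected.exists_adj_of_nontrivial v
    obtain ⟨w, hvw⟩ := hcc.preconnected.exists_adj_of_nontrivial v
    have hvw' := ((compl_adj G v w).mp hvw).2
    have : Nontrivial ({v}ᶜ : Set V) :=
      ⟨⟨u, hvu.ne.symm⟩, ⟨w, hvw.ne.symm⟩, fun h ↦ hvw' (Subtype.mk.inj h ▸ hvu)⟩
    have hlt : Nat.card ({v}ᶜ : Set V) < Nat.card V := Finite.card_subtype_lt (x := v) (by simp)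
    have hsplit : ¬ (G.induce {v}ᶜ).Connected ∨ ¬ (Gᶜ.induce {v}ᶜ).Connected := by
      by_contra! h
      refine not_subsingleton ({v}ᶜ : Set V) (ih _ hlt (hG.induce _) h.1 ?_)
      rw [induce_compl]
      exact h.2
    rcases hsplit with h | h
    · exact (hvw' <| hG.adj_of_not_connected_induce_compl_singleton hc h hvw.ne.symm).elim
    · exact (((compl_adj G v u).mp
        (hG.compl.adj_of_not_connected_induce_compl_singleton hcc h hvu.ne.symm)).2 hvu).elim

end SimpleGraph

/-- A cograph with at least two vertices is connected iff its complement is disconnected. -/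
theorem cograph_connected_iff_compl_disconnected {V : Type*} [Fintype V]
    (G : SimpleGraph V) (hcard : 2 ≤ Fintype.card V)
    (hcog : IsEmpty (pathGraph 4 ↪g G)) :
    G.Connected ↔ ¬ Gᶜ.Connected := by
  have hG : G.IsCograph := not_nonempty_iff.mpr hcog
  have : Nontrivial V := Fintype.one_lt_card_iff_nontrivial.mp hcard
  refine ⟨fun hc hcc ↦ not_subsingleton V (hG.subsingleton_of_connected_of_compl_connected hc hcc),
    fun hcc ↦ G.connected_or_connected_compl.resolve_right hcc⟩
end

section
/- Let G be a hole-free graph (no induced cycle on 5 or more vertices) admitting a partition (V1, V2) of its vertices whose crossing edges form a perfect matching M. If F ⊆ V1 induces a 2-connected subgraph of G with at least 3 vertices, then the set of M-partners of vertices of F induces a cluster graph (a disjoint union of cliques, i.e., a P_3-free graph) in G. -/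
/-!
Suppose the partners contain an induced path `a - b - c`, with `a = m x`, `b = m y`, `c = m z`
for `x, y, z ∈ F`. Since `F` is 2-connected, `F - y` still joins `z` to `x`, and a shortest such
path is induced. A partner `m v` has exactly one neighbour in `V1`, namely `v`, so on that path `a`
sees only `x`, `c` only `z`, and `b` nothing. Closing the path through `c, b, a` therefore gives an
induced cycle of length at least 5, a hole.
-/

open SimpleGraph

def TwoConnected {W : Type*} (H : SimpleGraph W) : Prop :=
  H.Connected ∧ 3 ≤ Nat.card W ∧ ∀ w : W, (H.induce {w}ᶜ).Connected

namespace SimpleGraph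

variable {V W : Type*} {G : SimpleGraph V} {H : SimpleGraph W}

lemma cycleGraph_adj_iff_val {n : ℕ} {i j : Fin (n + 2)} :
    (cycleGraph (n + 2)).Adj i j ↔
      j.val = (i.val + 1) % (n + 2) ∨ i.val = (j.val + 1) % (n + 2) := by
  rw [cycleGraph_adj, sub_eq_iff_eq_add, sub_eq_iff_eq_add, or_comm]
  simp [Fin.ext_iff, Fin.val_add, add_comm]

namespace Walk

lemma IsChordless.map {u v : V} {p : G.Walk u v} (hp : p.IsChordless) (f : G ↪g H) :
    (p.map f.toHom).IsChordless := by
  rw [isChordless_iff_forall_mem_edges] at hp ⊢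
  simp only [support_map, List.mem_map, edges_map]
  rintro _ _ ⟨u', hu', rfl⟩ ⟨v', hv', rfl⟩ h
  exact ⟨_, hp hu' hv' (f.map_adj_iff.mp h), rfl⟩

lemma isChordless_of_length_eq_dist {u v : V} (p : G.Walk u v) (hp : p.length = G.dist u v) :
    p.IsChordless := by
  rw [isChordless_iff_forall_mem_edges]
  suffices h : ∀ i j, i < j → j ≤ p.length → G.Adj (p.getVert i) (p.getVert j) →
      s(p.getVert i, p.getVert j) ∈ p.edges by
    intro u' v' hu' hv' hadj
    obtain ⟨i, rfl, hi⟩ := mem_support_iff_exists_getVert.mp hu'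
    obtain ⟨j, rfl, hj⟩ := mem_support_iff_exists_getVert.mp hv'
    rcases lt_trichotomy i j with hij | rfl | hij
    · exact h i j hij hj hadj
    · exact absurd rfl hadj.ne
    · rw [Sym2.eq_swap]; exact h j i hij hi hadj.symm
  intro i j hij hj hadj
  obtain rfl | hij := eq_or_lt_of_le (Nat.succ_le_of_lt hij)
  · exact p.mk_mem_edges_iff_exists.mpr ⟨i, by omega, rfl⟩
  · have := G.dist_le ((p.take i).append (cons hadj (p.drop j)))
    simp only [length_append, take_length, length_cons, drop_length] at this
    omega

theorem IsCycle.isIndContained_cycleGraph {u : V} {p : G.Walk u u} (hc : p.IsCycle)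
    (hp : p.IsChordless) : cycleGraph p.length ⊴ G := by
  obtain ⟨n, hn⟩ : ∃ n, p.length = n + 2 := ⟨p.length - 2, by have := hc.three_le_length; omega⟩
  rw [hn]
  have hinj {i j : ℕ} (hi : i < n + 2) (hj : j < n + 2) (h : p.getVert i = p.getVert j) : i = j :=
    hc.getVert_injOn' (show i ≤ p.length - 1 by omega) (show j ≤ p.length - 1 by omega) h
  have hwrap {i : ℕ} (hi : i < n + 2) : p.getVert ((i + 1) % (n + 2)) = p.getVert (i + 1) := by
    obtain hi | hi := Nat.lt_or_ge (i + 1) (n + 2)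
    · rw [Nat.mod_eq_of_lt hi]
    · rw [show i + 1 = n + 2 by omega, Nat.mod_self, ← hn, getVert_zero, getVert_length]
  refine ⟨⟨⟨fun i => p.getVert i, fun i j h => Fin.ext (hinj i.2 j.2 h)⟩, ?_⟩⟩
  intro i j
  change G.Adj (p.getVert i) (p.getVert j) ↔ _
  rw [cycleGraph_adj_iff_val]
  constructor
  · intro h
    obtain ⟨k, hk, hkij⟩ := p.mk_mem_edges_iff_exists.mp
      (hp.mem_edges (p.getVert_mem_support _) (p.getVert_mem_support _) h)
    rw [← hwrap (hn ▸ hk), Sym2.eq_iff] at hkij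
    have hk' := Nat.mod_lt (k + 1) (show 0 < n + 2 by omega)
    rcases hkij with ⟨h1, h2⟩ | ⟨h1, h2⟩
    · left; rw [← hinj (hn ▸ hk) i.2 h1]; exact (hinj hk' j.2 h2).symm
    · right; rw [← hinj (hn ▸ hk) j.2 h1]; exact (hinj hk' i.2 h2).symm
  · rintro (h | h)
    · rw [h, hwrap i.2]; exact p.adj_getVert_succ (by omega)
    · rw [h, hwrap j.2]; exact (p.adj_getVert_succ (by omega)).symm

theorem IsPath.isIndContained_cycleGraph_length_add_four {x z a b c : V} {q : G.Walk z x}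
    (hq : q.IsPath) (hqc : q.IsChordless) (hab : G.Adj a b) (hbc : G.Adj b c)
    (hac : ¬ G.Adj a c) (hne : a ≠ c) (ha : a ∉ q.support) (hb : b ∉ q.support)
    (hc : c ∉ q.support) (hax : ∀ w ∈ q.support, G.Adj a w ↔ w = x)
    (hbq : ∀ w ∈ q.support, ¬ G.Adj b w) (hcz : ∀ w ∈ q.support, G.Adj c w ↔ w = z) :
    cycleGraph (q.length + 4) ⊴ G := by
  have hxa : G.Adj x a := ((hax x q.end_mem_support).mpr rfl).symm
  have hcz' : G.Adj c z := (hcz z q.start_mem_support).mpr rfl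
  let C : G.Walk x x := cons hxa (cons hab (cons hbc (cons hcz' q)))
  have hcycle : C.IsCycle := by
    simp only [C, cons_isCycle_iff, cons_isPath_iff, support_cons, edges_cons, List.mem_cons]
    refine ⟨⟨⟨⟨hq, hc⟩, ?_⟩, ?_⟩, ?_⟩
    · grind [Adj.ne]
    · grind [Adj.ne]
    · grind [Adj.ne, fst_mem_support_of_mem_edges, snd_mem_support_of_mem_edges,
        end_mem_support, start_mem_support]
  have hchordless : C.IsChordless := by
    rw [isChordless_iff_forall_mem_edges] at hqc ⊢
    simp only [C, support_cons, edges_cons, List.mem_cons]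
    have hxq := q.end_mem_support
    intro u' v' hu' hv' h
    rcases hu' with rfl | rfl | rfl | rfl | hu' <;> rcases hv' with rfl | rfl | rfl | rfl | hv' <;>
      grind [Adj.ne, Adj.symm, Sym2.eq_swap]
  simpa [C] using hcycle.isIndContained_cycleGraph hchordless

end Walk

lemma exists_adj_adj_not_adj_of_pathGraph_three_embedding {s : Set V}
    (e : pathGraph 3 ↪g G.induce s) :
    ∃ a ∈ s, ∃ b ∈ s, ∃ c ∈ s, G.Adj a b ∧ G.Adj b c ∧ ¬ G.Adj a c ∧ a ≠ c := by
  have hadj (i j : Fin 3) : G.Adj (e i) (e j) ↔ (pathGraph 3).Adj i j := e.map_adj_iff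
  refine ⟨e 0, (e 0).2, e 1, (e 1).2, e 2, (e 2).2, (hadj 0 1).mpr ?_, (hadj 1 2).mpr ?_,
    fun h => ?_, fun h => ?_⟩
  · simp [pathGraph_adj]
  · simp [pathGraph_adj]
  · simpa [pathGraph_adj] using (hadj 0 2).mp h
  · simpa using e.injective (Subtype.ext h)

def IsPerfectMatchingCut (G : SimpleGraph V) (V1 : Set V) (m : V → V) : Prop :=
  ∀ v : V, G.Adj v (m v) ∧ (v ∈ V1 ↔ m v ∉ V1) ∧ ∀ w : V, G.Adj v w → (v ∈ V1 ↔ w ∉ V1) → w = m v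

namespace IsPerfectMatchingCut

variable {V1 : Set V} {m : V → V} {v w : V}

lemma partner_not_mem (hm : G.IsPerfectMatchingCut V1 m) (hv : v ∈ V1) : m v ∉ V1 :=
  (hm v).2.1.mp hv

lemma adj_partner_iff (hm : G.IsPerfectMatchingCut V1 m) (hv : v ∈ V1) (hw : w ∈ V1) :
    G.Adj (m v) w ↔ w = v := by
  have hmv := hm.partner_not_mem hv
  refine ⟨fun h => ?_, fun h => h ▸ (hm v).1.symm⟩
  rw [(hm (m v)).2.2 w h (iff_of_false hmv (not_not.mpr hw)),
    ← (hm (m v)).2.2 v (hm v).1.symm (iff_of_false hmv (not_not.mpr hv))]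

end IsPerfectMatchingCut

end SimpleGraph

theorem holeFree_pmcut_partner_set_cluster_general {V : Type*} (G : SimpleGraph V)
    (hhole : ∀ k : ℕ, 5 ≤ k → IsEmpty (cycleGraph k ↪g G))
    (V1 : Set V) (m : V → V)
    (hm : ∀ v : V, G.Adj v (m v) ∧ (v ∈ V1 ↔ m v ∉ V1) ∧
      ∀ w : V, G.Adj v w → (v ∈ V1 ↔ w ∉ V1) → w = m v)
    (F : Set V) (hF : F ⊆ V1)
    (h2conn : TwoConnected (G.induce F)) :
    IsEmpty (pathGraph 3 ↪g G.induce (m '' F)) := by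
  refine ⟨fun e => ?_⟩
  obtain ⟨_, ⟨x, hx, rfl⟩, _, ⟨y, hy, rfl⟩, _, ⟨z, hz, rfl⟩, hab, hbc, hac, hne⟩ :=
    exists_adj_adj_not_adj_of_pathGraph_three_embedding e
  have hcut : G.IsPerfectMatchingCut V1 m := hm
  let y' : F := ⟨y, hy⟩
  have hxy : (⟨x, hx⟩ : F) ∈ ({y'}ᶜ : Set F) := fun h => hab.ne (by simp_all [y'])
  have hzy : (⟨z, hz⟩ : F) ∈ ({y'}ᶜ : Set F) := fun h => hbc.ne' (by simp_all [y'])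
  obtain ⟨q, hq⟩ := ((h2conn.2.2 y').preconnected ⟨_, hzy⟩ ⟨_, hxy⟩).exists_walk_length_eq_dist
  let ι := (Embedding.induce (G := G) F).comp (Embedding.induce ({y'}ᶜ : Set F))
  let Q : G.Walk z x := q.map ι.toHom
  have hQ : ∀ w ∈ Q.support, w ∈ F ∧ w ≠ y := by
    intro _ hw
    obtain ⟨w, -, rfl⟩ := List.mem_map.mp (q.support_map ι.toHom ▸ hw)
    exact ⟨w.1.2, fun h => w.2 (Subtype.ext h)⟩
  have hQV1 : ∀ w ∈ Q.support, w ∈ V1 := fun w hw => hF (hQ w hw).1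
  have hcycle : cycleGraph (Q.length + 4) ⊴ G :=
    Walk.IsPath.isIndContained_cycleGraph_length_add_four
      ((q.isPath_of_length_eq_dist hq).map ι.injective)
      ((q.isChordless_of_length_eq_dist hq).map ι) hab hbc hac hne
      (fun h => hcut.partner_not_mem (hF hx) (hQV1 _ h))
      (fun h => hcut.partner_not_mem (hF hy) (hQV1 _ h))
      (fun h => hcut.partner_not_mem (hF hz) (hQV1 _ h))
      (fun w hw => hcut.adj_partner_iff (hF hx) (hQV1 w hw))
      (fun w hw h => (hQ w hw).2 ((hcut.adj_partner_iff (hF hy) (hQV1 w hw)).mp h))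
      (fun w hw => hcut.adj_partner_iff (hF hz) (hQV1 w hw))
  have hlen : Q.length ≠ 0 := fun h => hne (by rw [Walk.eq_of_length_eq_zero h])
  exact (hhole _ (by omega)).false hcycle.some

/-- Hole-free graphs with a perfect matching cut `(V1, V1ᶜ)` (the matching given by the
partner function `m`): if `F ⊆ V1` induces a 2-connected subgraph with at least 3
vertices, then the set of `M`-partners of `F` induces a cluster (`P₃`-free) graph. -/
theorem holeFree_pmcut_partner_set_cluster {V : Type*} (G : SimpleGraph V)
    (hhole : ∀ k : ℕ, 5 ≤ k → IsEmpty (cycleGraph k ↪g G))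
    (V1 : Set V) (m : V → V)
    (hm : ∀ v : V, G.Adj v (m v) ∧ (v ∈ V1 ↔ m v ∉ V1) ∧
      ∀ w : V, G.Adj v w → (v ∈ V1 ↔ w ∉ V1) → w = m v)
    (F : Set V) (hF : F ⊆ V1)
    (h2conn : TwoConnected (G.induce F)) (hF3 : 3 ≤ Nat.card F) :
    IsEmpty (pathGraph 3 ↪g G.induce (m '' F)) :=
  holeFree_pmcut_partner_set_cluster_general G hhole V1 m hm F hF h2conn
end

section
/- Let G be a chordal graph on 2n vertices that admits a partition (V1, V2) where G[V1] is isomorphic to the complement of G[V2] and the crossing edges form a perfect matching. Then G is isomorphic to the graph K_n\overline{K_n} obtained from a clique on n vertices and an independent set on n vertices joined by a perfect matching. -/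
/-!
Let `M` be the perfect matching between `V1` and `V2 = V1ᶜ`, an involution exchanging the
two sides. If `v w` is an edge inside one side, then `v w (M w) (M v)` would be an induced
4-cycle unless `M v` and `M w` are non-adjacent; so `M` maps the edges of `G[V1]` into the
non-edges of `G[V2]`, and since `G[V1]` is isomorphic to the complement of `G[V2]` these finite
sets have the same size: `M` is an isomorphism from `G[V1]` onto the complement of `G[V2]`.
An induced path `x y z` inside one side would now close up with `M z, M x` to an induced
5-cycle, so `G[V1]` and its complement are both disjoint unions of cliques. This forces
`G[V1]` to be complete or empty, and `G[V2]` to be the opposite, which is `Kₙ∂Kₙ`.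
-/

open SimpleGraph

/-- The split graph `Kₙ∂Kₙ`: a clique on `n` vertices, an independent set on `n`
vertices, and a perfect matching between them. -/
def splitMatch (n : ℕ) : SimpleGraph (Fin n ⊕ Fin n) where
  Adj x y :=
    match x, y with
    | Sum.inl i, Sum.inl j => i ≠ j
    | Sum.inl i, Sum.inr j => i = j
    | Sum.inr i, Sum.inl j => i = j
    | Sum.inr _, Sum.inr _ => False
  symm := by constructor; rintro (i|i) (j|j) h <;> simp_all <;> omega
  loopless := by constructor; rintro (i|i) h <;> simp_all

namespace SimpleGraph

variable {V : Type*} {G : SimpleGraph V}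

theorem nonempty_cycleGraph_four_embedding {a b c d : V} (hab : G.Adj a b) (hbc : G.Adj b c)
    (hcd : G.Adj c d) (hda : G.Adj d a) (hac : a ≠ c) (hbd : b ≠ d)
    (nac : ¬G.Adj a c) (nbd : ¬G.Adj b d) : Nonempty (cycleGraph 4 ↪g G) := by
  have := hab.ne; have := hbc.ne; have := hcd.ne; have := hda.ne
  refine ⟨⟨⟨![a, b, c, d], fun i j hij => ?_⟩, fun {i j} => ?_⟩⟩
  · fin_cases i <;> fin_cases j <;> simp_all [eq_comm]
  · change G.Adj (![a, b, c, d] i) (![a, b, c, d] j) ↔ _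
    rw [cycleGraph_adj]
    fin_cases i <;> fin_cases j <;> simp_all +decide [adj_comm]

theorem nonempty_cycleGraph_five_embedding {a b c d e : V} (hab : G.Adj a b) (hbc : G.Adj b c)
    (hcd : G.Adj c d) (hde : G.Adj d e) (hea : G.Adj e a)
    (hac : a ≠ c) (had : a ≠ d) (hbd : b ≠ d) (hbe : b ≠ e) (hce : c ≠ e)
    (nac : ¬G.Adj a c) (nad : ¬G.Adj a d) (nbd : ¬G.Adj b d) (nbe : ¬G.Adj b e)
    (nce : ¬G.Adj c e) : Nonempty (cycleGraph 5 ↪g G) := by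
  have := hab.ne; have := hbc.ne; have := hcd.ne; have := hde.ne; have := hea.ne
  refine ⟨⟨⟨![a, b, c, d, e], fun i j hij => ?_⟩, fun {i j} => ?_⟩⟩
  · fin_cases i <;> fin_cases j <;> simp_all [eq_comm]
  · change G.Adj (![a, b, c, d, e] i) (![a, b, c, d, e] j) ↔ _
    rw [cycleGraph_adj]
    fin_cases i <;> fin_cases j <;> simp_all +decide [adj_comm]

theorem eq_of_le_of_iso [Finite V] {H : SimpleGraph V} (hle : G ≤ H) (e : G ≃g H) : G = H := by
  classical
  have := Fintype.ofFinite V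
  exact edgeFinset_inj.1 <|
    Finset.eq_of_subset_of_card_le (edgeFinset_mono hle) e.card_edgeFinset_eq.ge

theorem isIndepSet_of_induce_eq_bot {s : Set V} (hs : G.induce s = ⊥) : G.IsIndepSet s :=
  fun v hv w hw _ hadj => by
    simpa [hs] using (show (G.induce s).Adj ⟨v, hv⟩ ⟨w, hw⟩ from hadj)

/-- A disjoint union of cliques, i.e. a graph with no induced path on three vertices. -/
def IsClusterGraph (G : SimpleGraph V) : Prop :=
  ∀ ⦃x y z : V⦄, G.Adj x y → G.Adj y z → x ≠ z → G.Adj x z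

theorem IsClusterGraph.eq_bot_or_eq_top (hG : G.IsClusterGraph) (hGc : Gᶜ.IsClusterGraph) :
    G = ⊥ ∨ G = ⊤ := by
  have adj_of_adj : ∀ ⦃a b c⦄, G.Adj a b → a ≠ c → G.Adj a c := by
    intro a b c hab hac
    by_contra hnac
    by_cases hbc : b = c
    · exact hnac (hbc ▸ hab)
    by_cases hbc' : G.Adj b c
    · exact hnac (hG hab hbc' hac)
    · have hca : Gᶜ.Adj c a := (compl_adj G c a).2 ⟨hac.symm, fun h => hnac h.symm⟩
      have hbca : Gᶜ.Adj b a := hGc ((compl_adj G b c).2 ⟨hbc, hbc'⟩) hca hab.ne.symm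
      exact ((compl_adj G b a).1 hbca).2 hab.symm
  by_contra! hne
  obtain ⟨x, y, hxy⟩ := ne_bot_iff_exists_adj.1 hne.1
  obtain ⟨u, w, huw, hnuw⟩ := ne_top_iff_exists_not_adj.1 hne.2
  by_cases hux : u = x
  · exact hnuw (hux ▸ adj_of_adj hxy (hux ▸ huw))
  · exact hnuw (adj_of_adj (adj_of_adj hxy (Ne.symm hux)).symm huw)

end SimpleGraph

namespace IsPerfectMatchingCut

variable {V : Type*} {G : SimpleGraph V} {S : Set V} (h : IsPerfectMatchingCut G S)

noncomputable def partner (v : V) : V := (h v).exists.choose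

theorem adj_partner (v : V) : G.Adj v (h.partner v) := (h v).exists.choose_spec.1

theorem mem_iff_partner_notMem (v : V) : v ∈ S ↔ h.partner v ∉ S :=
  (h v).exists.choose_spec.2

theorem eq_partner_of_adj {v w : V} (hvw : G.Adj v w) (hcross : v ∈ S ↔ w ∉ S) :
    w = h.partner v :=
  (h v).unique ⟨hvw, hcross⟩ (h v).exists.choose_spec

theorem partner_mem_iff {v : V} : h.partner v ∈ S ↔ v ∉ S := by
  have := h.mem_iff_partner_notMem v
  tauto

theorem partner_involutive : Function.Involutive h.partner := fun v =>
  (h.eq_partner_of_adj (h.adj_partner v).symm h.partner_mem_iff).symm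

theorem ne_partner {v w : V} (hside : v ∈ S ↔ w ∈ S) : v ≠ h.partner w := by
  rintro rfl
  have := h.mem_iff_partner_notMem w
  tauto

theorem adj_partner_iff {v w : V} (hside : v ∈ S ↔ w ∈ S) :
    G.Adj v (h.partner w) ↔ v = w := by
  refine ⟨fun hadj => ?_, fun hvw => hvw ▸ h.adj_partner v⟩
  have hcross : v ∈ S ↔ h.partner w ∉ S := by rw [h.partner_mem_iff]; tauto
  exact (h.partner_involutive.injective (h.eq_partner_of_adj hadj hcross)).symm

protected theorem compl (h : IsPerfectMatchingCut G S) : IsPerfectMatchingCut G Sᶜ := fun v => by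
  convert h v using 3
  simp only [Set.mem_compl_iff]
  tauto

noncomputable def partnerEquiv : S ≃ ↥Sᶜ where
  toFun v := ⟨h.partner v, (h.mem_iff_partner_notMem v).1 v.2⟩
  invFun w := ⟨h.partner w, h.partner_mem_iff.2 w.2⟩
  left_inv v := Subtype.ext (h.partner_involutive v)
  right_inv w := Subtype.ext (h.partner_involutive w)

theorem two_mul_card [Finite V] (h : IsPerfectMatchingCut G S) :
    2 * Nat.card S = Nat.card V := by
  rw [two_mul]
  nth_rw 2 [Nat.card_congr h.partnerEquiv]
  exact S.ncard_add_ncard_compl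

theorem not_adj_partner_partner (hC4 : IsEmpty (cycleGraph 4 ↪g G)) {v w : V}
    (hside : v ∈ S ↔ w ∈ S) (hvw : G.Adj v w) :
    ¬G.Adj (h.partner v) (h.partner w) := fun hp =>
  (nonempty_cycleGraph_four_embedding hvw (h.adj_partner w) hp.symm (h.adj_partner v).symm
    (h.ne_partner hside) (h.ne_partner hside.symm) (mt (h.adj_partner_iff hside).1 hvw.ne)
    (mt (h.adj_partner_iff hside.symm).1 hvw.ne.symm)).elim hC4.false

theorem not_adj_partner_partner_of_not_adj (hC5 : IsEmpty (cycleGraph 5 ↪g G)) {x y z : V}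
    (hxy : x ∈ S ↔ y ∈ S) (hyz : y ∈ S ↔ z ∈ S) (hxy' : G.Adj x y) (hyz' : G.Adj y z)
    (hxz : x ≠ z) (hxz' : ¬G.Adj x z) : ¬G.Adj (h.partner x) (h.partner z) := fun hp =>
  have hxz_side := hxy.trans hyz
  (nonempty_cycleGraph_five_embedding hxy' hyz' (h.adj_partner z) hp.symm (h.adj_partner x).symm
    hxz (h.ne_partner hxz_side) (h.ne_partner hyz) (h.ne_partner hxy.symm)
    (h.ne_partner hxz_side.symm) hxz' (mt (h.adj_partner_iff hxz_side).1 hxz)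
    (mt (h.adj_partner_iff hyz).1 hyz'.ne) (mt (h.adj_partner_iff hxy.symm).1 hxy'.ne.symm)
    (mt (h.adj_partner_iff hxz_side.symm).1 hxz.symm)).elim hC5.false

theorem induce_eq_comap_compl_induce [Finite V] (hC4 : IsEmpty (cycleGraph 4 ↪g G))
    (φ : G.induce S ≃g (G.induce Sᶜ)ᶜ) :
    G.induce S = (G.induce Sᶜ)ᶜ.comap h.partnerEquiv := by
  refine eq_of_le_of_iso (fun v w hvw => ?_) (φ.trans (Iso.comap h.partnerEquiv _).symm)
  refine (compl_adj _ _ _).2 ⟨h.partnerEquiv.injective.ne hvw.ne, ?_⟩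
  exact h.not_adj_partner_partner hC4 (iff_of_true v.2 w.2) hvw

theorem adj_iff_not_adj_partner_partner [Finite V] (hC4 : IsEmpty (cycleGraph 4 ↪g G))
    (φ : G.induce S ≃g (G.induce Sᶜ)ᶜ) {x z : V} (hside : x ∈ S ↔ z ∈ S)
    (hxz : x ≠ z) : G.Adj x z ↔ ¬G.Adj (h.partner x) (h.partner z) := by
  have hS : ∀ {x z : V}, x ∈ S → z ∈ S → x ≠ z →
      (G.Adj x z ↔ ¬G.Adj (h.partner x) (h.partner z)) := by
    intro x z hx hz hxz
    have := congrArg (·.Adj ⟨x, hx⟩ ⟨z, hz⟩) (h.induce_eq_comap_compl_induce hC4 φ)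
    simpa [partnerEquiv, hxz, h.partner_involutive.injective.ne hxz] using this
  by_cases hx : x ∈ S
  · exact hS hx (hside.1 hx) hxz
  · have := hS (h.partner_mem_iff.2 hx) (h.partner_mem_iff.2 (hside.not.1 hx))
      (h.partner_involutive.injective.ne hxz)
    rw [h.partner_involutive, h.partner_involutive] at this
    tauto

theorem adj_of_adj_of_adj [Finite V] (h : IsPerfectMatchingCut G S)
    (hC4 : IsEmpty (cycleGraph 4 ↪g G)) (hC5 : IsEmpty (cycleGraph 5 ↪g G))
    (φ : G.induce S ≃g (G.induce Sᶜ)ᶜ) {x y z : V}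
    (hxy : x ∈ S ↔ y ∈ S) (hyz : y ∈ S ↔ z ∈ S) (hxy' : G.Adj x y) (hyz' : G.Adj y z)
    (hxz : x ≠ z) : G.Adj x z := by
  by_contra hxz'
  exact h.not_adj_partner_partner_of_not_adj hC5 hxy hyz hxy' hyz' hxz hxz'
    ((h.adj_iff_not_adj_partner_partner hC4 φ (hxy.trans hyz) hxz).not_left.1 hxz')

theorem isClusterGraph_induce [Finite V] (h : IsPerfectMatchingCut G S)
    (hC4 : IsEmpty (cycleGraph 4 ↪g G)) (hC5 : IsEmpty (cycleGraph 5 ↪g G))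
    (φ : G.induce S ≃g (G.induce Sᶜ)ᶜ) : (G.induce S).IsClusterGraph :=
  fun x y z hxy hyz hxz => h.adj_of_adj_of_adj hC4 hC5 φ (iff_of_true x.2 y.2)
    (iff_of_true y.2 z.2) hxy hyz (Subtype.val_injective.ne hxz)

theorem isClusterGraph_compl_induce [Finite V] (h : IsPerfectMatchingCut G S)
    (hC4 : IsEmpty (cycleGraph 4 ↪g G)) (hC5 : IsEmpty (cycleGraph 5 ↪g G))
    (φ : G.induce S ≃g (G.induce Sᶜ)ᶜ) : (G.induce S)ᶜ.IsClusterGraph := by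
  have adj_partner_of_not_adj {a b : S} (hab : (G.induce S)ᶜ.Adj a b) :
      G.Adj (h.partner a) (h.partner b) := by
    obtain ⟨hne, hn⟩ := (compl_adj _ _ _).1 hab
    exact not_not.1 ((h.adj_iff_not_adj_partner_partner hC4 φ (iff_of_true a.2 b.2)
      (Subtype.val_injective.ne hne)).not.1 hn)
  intro x y z hxy hyz hxz
  have hxz' := Subtype.val_injective.ne hxz
  have hpart : G.Adj (h.partner x) (h.partner z) := h.adj_of_adj_of_adj hC4 hC5 φ
    (iff_of_false ((h.mem_iff_partner_notMem x).1 x.2) ((h.mem_iff_partner_notMem y).1 y.2))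
    (iff_of_false ((h.mem_iff_partner_notMem y).1 y.2) ((h.mem_iff_partner_notMem z).1 z.2))
    (adj_partner_of_not_adj hxy) (adj_partner_of_not_adj hyz)
    (h.partner_involutive.injective.ne hxz')
  exact (compl_adj _ _ _).2 ⟨hxz, fun hadj =>
    (h.adj_iff_not_adj_partner_partner hC4 φ (iff_of_true x.2 z.2) hxz').1 hadj hpart⟩

theorem isIndepSet_compl_of_isClique [Finite V] (h : IsPerfectMatchingCut G S)
    (hC4 : IsEmpty (cycleGraph 4 ↪g G)) (φ : G.induce S ≃g (G.induce Sᶜ)ᶜ)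
    (hS : G.IsClique S) : G.IsIndepSet Sᶜ := fun _ hv _ hw hvw hadj =>
  (h.adj_iff_not_adj_partner_partner hC4 φ (iff_of_false hv hw) hvw).1 hadj
    (hS (h.partner_mem_iff.2 hv) (h.partner_mem_iff.2 hw) (h.partner_involutive.injective.ne hvw))

theorem isClique_compl_of_isIndepSet [Finite V] (h : IsPerfectMatchingCut G S)
    (hC4 : IsEmpty (cycleGraph 4 ↪g G)) (φ : G.induce S ≃g (G.induce Sᶜ)ᶜ)
    (hS : G.IsIndepSet S) : G.IsClique Sᶜ := fun _ hv _ hw hvw =>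
  (h.adj_iff_not_adj_partner_partner hC4 φ (iff_of_false hv hw) hvw).2
    (hS (h.partner_mem_iff.2 hv) (h.partner_mem_iff.2 hw) (h.partner_involutive.injective.ne hvw))

theorem nonempty_iso_splitMatch (h : IsPerfectMatchingCut G S) {n : ℕ} (hS : G.IsClique S)
    (hSc : G.IsIndepSet Sᶜ) (e : S ≃ Fin n) : Nonempty (G ≃g splitMatch n) := by
  classical
  let f : Fin n ⊕ Fin n ≃ V :=
    (Equiv.sumCongr e.symm (e.symm.trans h.partnerEquiv)).trans (Equiv.sumCompl (· ∈ S))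
  have he : ∀ i j, (e.symm i : V) = e.symm j ↔ i = j := fun i j =>
    Subtype.val_injective.eq_iff.trans e.symm.injective.eq_iff
  refine ⟨(⟨f, fun {a b} => ?_⟩ : splitMatch n ≃g G).symm⟩
  rcases a with i | i <;> rcases b with j | j
  · exact ⟨fun hadj => (he i j).not.1 hadj.ne,
      fun hij => hS (e.symm i).2 (e.symm j).2 ((he i j).not.2 hij)⟩
  · exact (h.adj_partner_iff (iff_of_true (e.symm i).2 (e.symm j).2)).trans (he i j)
  · exact (G.adj_comm _ _).trans <|
      (h.adj_partner_iff (iff_of_true (e.symm j).2 (e.symm i).2)).trans ((he j i).trans eq_comm)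
  · exact iff_of_false (fun hadj =>
      hSc (h.partnerEquiv (e.symm i)).2 (h.partnerEquiv (e.symm j)).2 hadj.ne hadj) id

end IsPerfectMatchingCut

/-- A chordal graph on `2n` vertices admitting a complementary decomposition with a
perfect matching cut is isomorphic to `Kₙ∂Kₙ`. -/
theorem chordal_comp_sub_pm {V : Type*} [Fintype V] (G : SimpleGraph V) (n : ℕ)
    (hcard : Fintype.card V = 2 * n)
    (hchordal : ∀ k : ℕ, 4 ≤ k → IsEmpty (cycleGraph k ↪g G))
    (V1 : Set V)
    (hcut : IsPerfectMatchingCut G V1)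
    (hiso : Nonempty (G.induce V1 ≃g (G.induce V1ᶜ)ᶜ)) :
    Nonempty (G ≃g splitMatch n) := by
  obtain ⟨φ⟩ := hiso
  have hC4 := hchordal 4 le_rfl
  have hC5 := hchordal 5 (by norm_num)
  have hcardV1 : Nat.card V1 = n := by
    have := hcut.two_mul_card
    rw [Nat.card_eq_fintype_card (α := V), hcard] at this
    omega
  have hcardV1c : Nat.card ↥V1ᶜ = n := (Nat.card_congr hcut.partnerEquiv).symm.trans hcardV1
  rcases (hcut.isClusterGraph_induce hC4 hC5 φ).eq_bot_or_eq_top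
    (hcut.isClusterGraph_compl_induce hC4 hC5 φ) with hbot | htop
  · have hindep := isIndepSet_of_induce_eq_bot hbot
    exact hcut.compl.nonempty_iso_splitMatch (hcut.isClique_compl_of_isIndepSet hC4 φ hindep)
      (by rwa [compl_compl]) (Finite.equivFinOfCardEq hcardV1c)
  · have hclique := induce_eq_top.1 htop
    exact hcut.nonempty_iso_splitMatch hclique (hcut.isIndepSet_compl_of_isClique hC4 φ hclique)
      (Finite.equivFinOfCardEq hcardV1)
end

section
/- Let G be a graph admitting a partition (V1, V2) whose crossing edges form a perfect matching M, where G[V1] is isomorphic to the complement of G[V2]. If G[V1] contains an induced path u1 u2 u3 on 3 vertices, and v1, v2, v3 are the M-partners of u1, u2, u3 in V2, then the subgraph of G induced by {u1,u2,u3,v1,v2,v3} contains an induced 2K_2 or an induced C_4. -/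
open SimpleGraph

/-- If `G` has a complementary decomposition `(V1, V1ᶜ)` whose crossing edges form a
perfect matching (with partner function `m`), and `u1 u2 u3` is an induced `P₃` in
`G[V1]` with partners `v1, v2, v3`, then the subgraph induced by these six vertices
contains an induced `2K₂` or an induced `C₄`. -/
theorem p3_partners_give_2K2_or_C4 {V : Type*} (G : SimpleGraph V) (V1 : Set V)
    (m : V → V)
    (hm : ∀ v : V, G.Adj v (m v) ∧ (v ∈ V1 ↔ m v ∉ V1) ∧
      ∀ w : V, G.Adj v w → (v ∈ V1 ↔ w ∉ V1) → w = m v)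
    (hiso : Nonempty (G.induce V1 ≃g (G.induce V1ᶜ)ᶜ))
    (u1 u2 u3 : V) (hu1 : u1 ∈ V1) (hu2 : u2 ∈ V1) (hu3 : u3 ∈ V1)
    (hne12 : u1 ≠ u2) (hne13 : u1 ≠ u3) (hne23 : u2 ≠ u3)
    (h12 : G.Adj u1 u2) (h23 : G.Adj u2 u3) (h13 : ¬ G.Adj u1 u3) :
    let S : Set V := {u1, u2, u3, m u1, m u2, m u3}
    (∃ a b c d : V, a ∈ S ∧ b ∈ S ∧ c ∈ S ∧ d ∈ S ∧
      a ≠ b ∧ a ≠ c ∧ a ≠ d ∧ b ≠ c ∧ b ≠ d ∧ c ≠ d ∧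
      G.Adj a b ∧ G.Adj c d ∧ ¬ G.Adj a c ∧ ¬ G.Adj a d ∧ ¬ G.Adj b c ∧ ¬ G.Adj b d) ∨
    (∃ a b c d : V, a ∈ S ∧ b ∈ S ∧ c ∈ S ∧ d ∈ S ∧
      a ≠ b ∧ a ≠ c ∧ a ≠ d ∧ b ≠ c ∧ b ≠ d ∧ c ≠ d ∧
      G.Adj a b ∧ G.Adj b c ∧ G.Adj c d ∧ G.Adj d a ∧ ¬ G.Adj a c ∧ ¬ G.Adj b d) := by
  intro S
  classical
  -- partners are outside V1
  have hv1 : m u1 ∉ V1 := (hm u1).2.1.mp hu1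
  have hv2 : m u2 ∉ V1 := (hm u2).2.1.mp hu2
  have hv3 : m u3 ∉ V1 := (hm u3).2.1.mp hu3
  -- m is an involution on V1, hence injective there
  have hinv : ∀ u : V, u ∈ V1 → u = m (m u) := by
    intro u hu
    exact (hm (m u)).2.2 u ((hm u).1.symm)
      (by constructor <;> intro h <;> [exact absurd h ((hm u).2.1.mp hu); exact absurd hu h])
  have hinj : ∀ a b : V, a ∈ V1 → b ∈ V1 → m a = m b → a = b := by
    intro a b ha hb h
    rw [hinv a ha, hinv b hb, h]
  -- cross non-adjacency: u_i not adjacent to v_j for i ≠ j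
  have hcross : ∀ a b : V, a ∈ V1 → b ∈ V1 → a ≠ b → ¬ G.Adj a (m b) := by
    intro a b ha hb hab hadj
    have : m b = m a := (hm a).2.2 (m b) hadj
      (by constructor <;> intro h <;>
        [exact (hm b).2.1.mp hb; exact ha])
    exact hab (hinj a b ha hb this.symm)
  have c12 : ¬ G.Adj u1 (m u2) := hcross u1 u2 hu1 hu2 hne12
  have c13 : ¬ G.Adj u1 (m u3) := hcross u1 u3 hu1 hu3 hne13
  have c21 : ¬ G.Adj u2 (m u1) := hcross u2 u1 hu2 hu1 hne12.symm
  have c23 : ¬ G.Adj u2 (m u3) := hcross u2 u3 hu2 hu3 hne23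
  have c31 : ¬ G.Adj u3 (m u1) := hcross u3 u1 hu3 hu1 hne13.symm
  have c32 : ¬ G.Adj u3 (m u2) := hcross u3 u2 hu3 hu2 hne23.symm
  -- distinctness
  have d1 : u1 ≠ m u1 := fun h => hv1 (h ▸ hu1)
  have d2 : u2 ≠ m u2 := fun h => hv2 (h ▸ hu2)
  have d3 : u3 ≠ m u3 := fun h => hv3 (h ▸ hu3)
  have d12 : u1 ≠ m u2 := fun h => hv2 (h ▸ hu1)
  have d13 : u1 ≠ m u3 := fun h => hv3 (h ▸ hu1)
  have d21 : u2 ≠ m u1 := fun h => hv1 (h ▸ hu2)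
  have d23 : u2 ≠ m u3 := fun h => hv3 (h ▸ hu2)
  have d31 : u3 ≠ m u1 := fun h => hv1 (h ▸ hu3)
  have d32 : u3 ≠ m u2 := fun h => hv2 (h ▸ hu3)
  have e12 : m u1 ≠ m u2 := fun h => hne12 (hinj u1 u2 hu1 hu2 h)
  have e13 : m u1 ≠ m u3 := fun h => hne13 (hinj u1 u3 hu1 hu3 h)
  have e23 : m u2 ≠ m u3 := fun h => hne23 (hinj u2 u3 hu2 hu3 h)
  have a1 : G.Adj u1 (m u1) := (hm u1).1
  have a2 : G.Adj u2 (m u2) := (hm u2).1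
  have a3 : G.Adj u3 (m u3) := (hm u3).1
  have s1 : u1 ∈ S := by simp [S]
  have s2 : u2 ∈ S := by simp [S]
  have s3 : u3 ∈ S := by simp [S]
  have t1 : m u1 ∈ S := by simp [S]
  have t2 : m u2 ∈ S := by simp [S]
  have t3 : m u3 ∈ S := by simp [S]
  by_cases p12 : G.Adj (m u1) (m u2)
  · -- C4: u1 u2 v2 v1
    exact Or.inr ⟨u1, u2, m u2, m u1, s1, s2, t2, t1,
      hne12, d12, d1, d2, d21, e12.symm,
      h12, a2, p12.symm, a1.symm, c12, c21⟩
  by_cases p23 : G.Adj (m u2) (m u3)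
  · -- C4: u2 u3 v3 v2
    exact Or.inr ⟨u2, u3, m u3, m u2, s2, s3, t3, t2,
      hne23, d23, d2, d3, d32, e23.symm,
      h23, a3, p23.symm, a2.symm, c23, c32⟩
  by_cases p13 : G.Adj (m u1) (m u3)
  · -- 2K2: u2 v2 | v1 v3
    exact Or.inl ⟨u2, m u2, m u1, m u3, s2, t2, t1, t3,
      d2, d21, d23, e12.symm, e23, e13,
      a2, p13, c21, c23, fun h => p12 h.symm, p23⟩
  · -- 2K2: u1 v1 | u3 v3
    exact Or.inl ⟨u1, m u1, u3, m u3, s1, t1, s3, t3,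
      d1, hne13, d13, d31.symm, e13, d3,
      a1, a3, h13, c13, fun h => c31 h.symm, p13⟩
end
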